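/- The optimality reduction for star queries: fix m ≥ 2 and constants ε ∈ [0,1], ε' > 0 with ε' < ε, and set α = mε − ε'. If an algorithm enumerates the star query Q*_m on any database D with preprocessing time C·|D|^{1+(m−1)ε−ε'} and delay C·|D|^{1−ε}·log|D|, then on any database D' with output size |Q*_m(D')| = |D'|^α / log|D'|, the total time to enumerate all results is O(|D'|^{1−ε'/m} · |Q*_m(D')|^{1−1/m}). -/

import Mathlib

/-! The target exponent `(1 - ε'/m) + (mε - ε')(1 - 1/m)` simplifies to exactly the preprocessing
exponent `1 + (m - 1)ε - ε'`, and so does the delay exponent `1 - ε` plus the output exponent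
`mε - ε'`, the `log |D'|` factor of the delay cancelling the one in the output size. Hence both
terms of the total time equal `C·|D'|^(1 + (m - 1)ε - ε')`, i.e. `C` times the target bound. -/

lemma Real.rpow_mul_rpow_rpow {x : ℝ} (hx : 0 < x) (a b c : ℝ) :
    x ^ a * (x ^ b) ^ c = x ^ (a + b * c) := by
  rw [← Real.rpow_mul hx.le, ← Real.rpow_add hx]

lemma star_target_exponent_eq {m : ℝ} (hm : m ≠ 0) (ε ε' : ℝ) :
    (1 - ε' / m) + (m * ε - ε') * (1 - 1 / m) = 1 + (m - 1) * ε - ε' := by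
  field_simp
  ring

lemma star_delay_time_eq {x : ℝ} (hx : 0 < x) (hlog : Real.log x ≠ 0) (C m ε ε' : ℝ) :
    C * x ^ (1 - ε) * Real.log x * (x ^ (m * ε - ε') / Real.log x) =
      C * x ^ (1 + (m - 1) * ε - ε') := by
  rw [mul_assoc _ (Real.log x), mul_div_cancel₀ _ hlog, mul_assoc, ← Real.rpow_add hx]
  ring_nf

theorem star_optimality_reduction_general (m ε ε' : ℝ) (hm : 2 ≤ m) :
    (1 + (m - 1) * ε - ε' ≤ (1 - ε' / m) + (m * ε - ε') * (1 - 1 / m)) ∧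
    (1 - ε + m * ε - ε' ≤ (1 - ε' / m) + (m * ε - ε') * (1 - 1 / m)) ∧
    (∀ C x : ℝ, 0 ≤ C → Real.exp 1 ≤ x →
      C * x ^ (1 + (m - 1) * ε - ε') +
        C * x ^ (1 - ε) * Real.log x * (x ^ (m * ε - ε') / Real.log x) ≤
      2 * C * (x ^ (1 - ε' / m) * (x ^ (m * ε - ε')) ^ (1 - 1 / m))) := by
  have hexp := star_target_exponent_eq (m := m) (by linarith) ε ε'
  refine ⟨hexp.ge, by linarith, fun C x _ hx => le_of_eq ?_⟩
  have hx1 : 1 < x := (Real.one_lt_exp_iff.2 one_pos).trans_le hx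
  have hx0 : 0 < x := one_pos.trans hx1
  rw [star_delay_time_eq hx0 (Real.log_pos hx1).ne', Real.rpow_mul_rpow_rpow hx0, hexp]
  ring

/-- Optimality reduction for star queries: the exponent arithmetic showing both the
preprocessing term and the delay term are bounded by the target exponent, and the
resulting total-time bound `O(|D'|^(1-ε'/m) · |Q(D')|^(1-1/m))` with output size
`|D'|^(mε-ε')/log|D'|`. -/
theorem star_optimality_reduction (m ε ε' : ℝ) (hm : 2 ≤ m)
    (hε0 : 0 ≤ ε) (hε1 : ε ≤ 1) (hε'0 : 0 < ε') (hε' : ε' < ε) :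
    (1 + (m - 1) * ε - ε' ≤ (1 - ε' / m) + (m * ε - ε') * (1 - 1 / m)) ∧
    (1 - ε + m * ε - ε' ≤ (1 - ε' / m) + (m * ε - ε') * (1 - 1 / m)) ∧
    (∀ C x : ℝ, 0 ≤ C → Real.exp 1 ≤ x →
      C * x ^ (1 + (m - 1) * ε - ε') +
        C * x ^ (1 - ε) * Real.log x * (x ^ (m * ε - ε') / Real.log x) ≤
      2 * C * (x ^ (1 - ε' / m) * (x ^ (m * ε - ε')) ^ (1 - 1 / m))) :=
  star_optimality_reduction_general m ε ε' hm
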